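/- arXiv:1601.03191 — 5 statements merged into one kernel-verified Lean document; each statement's English description precedes it below -/
import Mathlib

section
/- The algebra C_W(u) is generated as a unital k-algebra by the elements g_s and e_s for s ∈ S; in particular, every generator e_t for t ∈ R lies in the unital subalgebra generated by {g_s : s ∈ S} ∪ {e_s : s ∈ S}. -/
open scoped Classical

noncomputable section

namespace CWpaper

variable {B : Type} {M : CoxeterMatrix B} {W : Type} [Group W] (cs : CoxeterSystem M W)
variable (k : Type) [CommRing k]

/-- The set of reflections of the Coxeter system, as a subtype. -/
abbrev Refl := {t : W // cs.IsReflection t}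

/-- Index type for the generators of `C_W(u)`: `inl i` indexes `g` generators,
`inr t` indexes `e` generators. -/
abbrev Gen := B ⊕ Refl cs

/-- The free-algebra generator corresponding to `g_s`. -/
def gf (i : B) : FreeAlgebra k (Gen cs) := FreeAlgebra.ι k (Sum.inl i)

/-- The free-algebra generator corresponding to `e_t`. -/
def ef (t : Refl cs) : FreeAlgebra k (Gen cs) := FreeAlgebra.ι k (Sum.inr t)

/-- A simple reflection, as a reflection. -/
def simpleR (i : B) : Refl cs := ⟨cs.simple i, cs.isReflection_simple i⟩

/-- Conjugate of a reflection by a group element. -/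
def conjR (w : W) (t : Refl cs) : Refl cs := ⟨w * t.1 * w⁻¹, t.2.conj w⟩

/-- The defining relations of the algebra `C_W(u)`. -/
inductive CWrel (u : B → k) : FreeAlgebra k (Gen cs) → FreeAlgebra k (Gen cs) → Prop
  | braid (i j : B) (h : M i j ≠ 0) :
      CWrel u (((CoxeterSystem.alternatingWord i j (M i j)).map (gf cs k)).prod)
              (((CoxeterSystem.alternatingWord j i (M i j)).map (gf cs k)).prod)
  | idem (t : Refl cs) : CWrel u (ef cs k t * ef cs k t) (ef cs k t)
  | comm (t₁ t₂ : Refl cs) : CWrel u (ef cs k t₁ * ef cs k t₂) (ef cs k t₂ * ef cs k t₁)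
  | conj (t t₁ : Refl cs) :
      CWrel u (ef cs k t * ef cs k t₁) (ef cs k t * ef cs k (conjR cs t.1 t₁))
  | move (i : B) (t : Refl cs) :
      CWrel u (gf cs k i * ef cs k t) (ef cs k (conjR cs (cs.simple i) t) * gf cs k i)
  | quad (i : B) :
      CWrel u (gf cs k i * gf cs k i)
        (1 + algebraMap k _ (u i - 1) * ef cs k (simpleR cs i) * (1 + gf cs k i))

variable (u : B → k)

/-- The algebra `C_W(u)`. -/
abbrev CW := RingQuot (CWrel cs k u)

/-- The generator `g_s` of `C_W(u)`. -/
def gCW (i : B) : CW cs k u := RingQuot.mkAlgHom k (CWrel cs k u) (gf cs k i)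

/-- The generator `e_t` of `C_W(u)`. -/
def eCW (t : Refl cs) : CW cs k u := RingQuot.mkAlgHom k (CWrel cs k u) (ef cs k t)

theorem eCW_commute (t₁ t₂ : Refl cs) : Commute (eCW cs k u t₁) (eCW cs k u t₂) := by
  have h := RingQuot.mkAlgHom_rel k (CWrel.comm (cs := cs) (k := k) (u := u) t₁ t₂)
  simp only [map_mul] at h
  unfold eCW
  exact h

/-- The product `e_J = ∏_{t ∈ J} e_t` for a finite set of reflections `J`. -/
def eJ (J : Finset (Refl cs)) : CW cs k u :=
  J.noncommProd (eCW cs k u) (fun t₁ _ t₂ _ _ => eCW_commute cs k u t₁ t₂)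

/-- `gg : W → C_W(u)` is the family `(g_w)_{w ∈ W}` iff for every reduced word
`l` for `w`, `gg w` is the product of the `g_s`, `s ∈ l`. -/
def IsGFamily (gg : W → CW cs k u) : Prop :=
  ∀ l : List B, cs.IsReduced l → gg (cs.wordProd l) = (l.map (gCW cs k u)).prod

end CWpaper

/-! The relations of `C_W(u)` turn `g_s e_t g_s` into `e_{sts}` plus a multiple of
`e_s e_t (1 + g_s)`, so `e_{sts}` is generated by `e_t`, `e_s` and `g_s`. Every reflection is
reached from a simple one by repeated conjugation by simple reflections, and `C_W(u)` is a
quotient of the free algebra on the `g_s` and `e_t`. -/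

theorem FreeAlgebra.adjoin_range_comp_ι_of_surjective {R X A : Type*} [CommSemiring R]
    [Semiring A] [Algebra R A] {f : FreeAlgebra R X →ₐ[R] A} (hf : Function.Surjective f) :
    Algebra.adjoin R (Set.range (f ∘ FreeAlgebra.ι R)) = ⊤ := by
  rw [Algebra.adjoin_range_eq_range_freeAlgebra_lift, FreeAlgebra.lift_comp_ι]
  exact f.range_eq_top.2 hf

namespace CWpaper

variable {B : Type} {M : CoxeterMatrix B} {W : Type} [Group W] (cs : CoxeterSystem M W)
variable (k : Type) [CommRing k] (u : B → k)

theorem conjR_simple_conjR_simple (i : B) (t : Refl cs) :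
    conjR cs (cs.simple i) (conjR cs (cs.simple i) t) = t := by
  apply Subtype.ext
  simp [conjR, mul_assoc]

theorem adjoin_range_gCW_union_range_eCW :
    Algebra.adjoin k (Set.range (gCW cs k u) ∪ Set.range (eCW cs k u)) = ⊤ := by
  have hgen : Sum.elim (gCW cs k u) (eCW cs k u) = RingQuot.mkAlgHom k _ ∘ FreeAlgebra.ι k := by
    funext x
    cases x <;> rfl
  rw [← Set.Sum.elim_range, hgen]
  exact FreeAlgebra.adjoin_range_comp_ι_of_surjective (RingQuot.mkAlgHom_surjective k _)

theorem gCW_mul_eCW (i : B) (t : Refl cs) :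
    gCW cs k u i * eCW cs k u t = eCW cs k u (conjR cs (cs.simple i) t) * gCW cs k u i := by
  have h := RingQuot.mkAlgHom_rel k (CWrel.move (cs := cs) (u := u) i t)
  rw [map_mul, map_mul] at h
  exact h

theorem gCW_mul_self (i : B) :
    gCW cs k u i * gCW cs k u i =
      1 + (u i - 1) • (eCW cs k u (simpleR cs i) * (1 + gCW cs k u i)) := by
  have h := RingQuot.mkAlgHom_rel k (CWrel.quad (cs := cs) (u := u) i)
  simp only [map_mul, map_add, map_one, AlgHom.commutes] at h
  rw [Algebra.smul_def, ← mul_assoc]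
  exact h

theorem eCW_mul_eCW_conjR (t t₁ : Refl cs) :
    eCW cs k u t * eCW cs k u t₁ = eCW cs k u t * eCW cs k u (conjR cs t.1 t₁) := by
  have h := RingQuot.mkAlgHom_rel k (CWrel.conj (u := u) t t₁)
  rw [map_mul, map_mul] at h
  exact h

theorem eCW_conjR_simple (i : B) (t : Refl cs) :
    eCW cs k u (conjR cs (cs.simple i) t) =
      gCW cs k u i * eCW cs k u t * gCW cs k u i -
        (u i - 1) • (eCW cs k u (simpleR cs i) * eCW cs k u t * (1 + gCW cs k u i)) := by
  set t' := conjR cs (cs.simple i) t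
  have hswap : eCW cs k u t' * eCW cs k u (simpleR cs i) =
      eCW cs k u (simpleR cs i) * eCW cs k u t := by
    rw [(eCW_commute cs k u _ _).eq, eCW_mul_eCW_conjR]
    exact congrArg (_ * eCW cs k u ·) (conjR_simple_conjR_simple cs i t)
  rw [eq_sub_iff_add_eq, eq_comm]
  calc gCW cs k u i * eCW cs k u t * gCW cs k u i
      = eCW cs k u t' * (gCW cs k u i * gCW cs k u i) := by rw [gCW_mul_eCW, mul_assoc]
    _ = eCW cs k u t' * (1 + (u i - 1) • (eCW cs k u (simpleR cs i) * (1 + gCW cs k u i))) := by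
        rw [gCW_mul_self]
    _ = eCW cs k u t' +
          (u i - 1) • (eCW cs k u (simpleR cs i) * eCW cs k u t * (1 + gCW cs k u i)) := by
        rw [mul_add, mul_one, mul_smul_comm, ← mul_assoc, hswap]

theorem eCW_mem_of_forall_mem {A : Subalgebra k (CW cs k u)} (hg : ∀ i, gCW cs k u i ∈ A)
    (he : ∀ i, eCW cs k u (simpleR cs i) ∈ A) (t : Refl cs) : eCW cs k u t ∈ A := by
  obtain ⟨t, w, i, rfl⟩ := t
  induction w using cs.simple_induction_left with
  | one => simpa [simpleR] using he i
  | mul_simple_left w j ih =>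
    have hconj : (⟨cs.simple j * w * cs.simple i * (cs.simple j * w)⁻¹,
        (cs.isReflection_simple i).conj _⟩ : Refl cs) =
        conjR cs (cs.simple j) ⟨w * cs.simple i * w⁻¹, (cs.isReflection_simple i).conj w⟩ := by
      apply Subtype.ext
      simp only [conjR, mul_inv_rev, cs.inv_simple, mul_assoc]
    rw [hconj, eCW_conjR_simple]
    exact sub_mem (mul_mem (mul_mem (hg j) ih) (hg j))
      (A.smul_mem (mul_mem (mul_mem (he j) ih) (add_mem A.one_mem (hg j))) _)

theorem statement0_general {B : Type} {M : CoxeterMatrix B} {W : Type} [Group W]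
    (cs : CoxeterSystem M W) (k : Type) [CommRing k] (u : B → k) :
    Algebra.adjoin k
        (Set.range (gCW cs k u) ∪ Set.range (fun i => eCW cs k u (simpleR cs i))) = ⊤ ∧
      ∀ t : Refl cs,
        eCW cs k u t ∈ Algebra.adjoin k
          (Set.range (gCW cs k u) ∪ Set.range (fun i => eCW cs k u (simpleR cs i))) := by
  set A := Algebra.adjoin k
    (Set.range (gCW cs k u) ∪ Set.range (fun i => eCW cs k u (simpleR cs i)))
  have he : ∀ t, eCW cs k u t ∈ A :=
    eCW_mem_of_forall_mem cs k u (fun i => Algebra.subset_adjoin (.inl ⟨i, rfl⟩))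
      (fun i => Algebra.subset_adjoin (.inr ⟨i, rfl⟩))
  refine ⟨top_unique ?_, he⟩
  rw [← adjoin_range_gCW_union_range_eCW cs k u, Algebra.adjoin_le_iff]
  rintro _ (⟨i, rfl⟩ | ⟨t, rfl⟩)
  · exact Algebra.subset_adjoin (.inl ⟨i, rfl⟩)
  · exact he t

/-- The algebra `C_W(u)` is generated as a unital `k`-algebra by the
elements `g_s` and `e_s` for `s ∈ S`; in particular every generator `e_t`, `t ∈ R`,
lies in the unital subalgebra generated by `{g_s : s ∈ S} ∪ {e_s : s ∈ S}`. -/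
theorem statement0 {B : Type} {M : CoxeterMatrix B} {W : Type} [Group W]
    (cs : CoxeterSystem M W) (k : Type) [CommRing k] (u : B → k)
    (hu : ∀ i j : B, IsConj (cs.simple i) (cs.simple j) → u i = u j) :
    Algebra.adjoin k
        (Set.range (gCW cs k u) ∪ Set.range (fun i => eCW cs k u (simpleR cs i))) = ⊤ ∧
      ∀ t : Refl cs,
        eCW cs k u t ∈ Algebra.adjoin k
          (Set.range (gCW cs k u) ∪ Set.range (fun i => eCW cs k u (simpleR cs i))) :=
  statement0_general cs k u

end CWpaper
end
end

section
/- The k-linear map c : kM → k^L sending e_λ to φ_λ, where φ_λ(μ) = 1 if λ ≤ μ and φ_λ(μ) = 0 otherwise, is an isomorphism of k-algebras from the semigroup algebra kM onto the k-algebra k^L of functions L → k with pointwise operations. -/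
/-!
Under `c` the basis element `e_λ` goes to the indicator `φ_λ` of the principal filter `Ici λ`,
and `φ_λ * φ_μ = φ_(λ ⊔ μ)` because `Ici λ ∩ Ici μ = Ici (λ ⊔ μ)`; as `c` is linear and the
product of `kM` is bilinear, `c` is multiplicative. In coordinates `c f μ = ∑_{λ ≤ μ} f λ` is the
zeta transform of `f`, which Möbius inversion in the incidence algebra of `L` inverts.
-/

open scoped Classical

noncomputable section

namespace CWpaper

variable (k : Type) [CommRing k] (L : Type) [SemilatticeSup L]

/-- The band algebra `kM` of the finite join semilattice `L`:
the free `k`-module on basis `(e_λ)_{λ ∈ L}` with multiplication bilinearly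
extending `e_λ e_μ = e_{λ ⊔ μ}`. -/
def BandAlgebra : Type := L →₀ k

instance : AddCommGroup (BandAlgebra k L) := Finsupp.instAddCommGroup
instance : Module k (BandAlgebra k L) := Finsupp.module L k

/-- The basis element `e_λ` of the band algebra. -/
def bandE (l : L) : BandAlgebra k L := Finsupp.single l 1

instance : Mul (BandAlgebra k L) :=
  ⟨fun f g => f.sum fun a ca => g.sum fun b cb => Finsupp.single (a ⊔ b) (ca * cb)⟩

/-- The map `c : kM → k^L`, `e_λ ↦ φ_λ` where `φ_λ(μ) = 1` if `λ ≤ μ` and `0` otherwise,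
extended `k`-linearly. -/
def bandToFun (f : BandAlgebra k L) : L → k :=
  fun μ => f.sum fun a ca => if a ≤ μ then ca else 0

end CWpaper

open Finset IncidenceAlgebra

/- Mathlib's `moebius_inversion_bot` assumes an `OrderBot`, which a finite join semilattice need
not have; only `LocallyFiniteOrderBot` is needed. -/
section MoebiusInversion

variable {𝕜 α : Type*} [PartialOrder α] [LocallyFiniteOrderBot α]

def zetaTransform [AddCommMonoid 𝕜] (f : α → 𝕜) (x : α) : 𝕜 := ∑ y ∈ Iic x, f y

variable [LocallyFiniteOrder α]

theorem sum_Iic_sum_Iic_comm [AddCommMonoid 𝕜] (F : α → α → 𝕜) (z : α) :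
    ∑ x ∈ Iic z, ∑ y ∈ Iic x, F x y = ∑ y ∈ Iic z, ∑ x ∈ Icc y z, F x y :=
  sum_comm' fun x y => by
    simp only [mem_Iic, mem_Icc]
    exact ⟨fun ⟨hxz, hyx⟩ => ⟨⟨hyx, hxz⟩, hyx.trans hxz⟩, fun ⟨⟨hyx, hxz⟩, _⟩ => ⟨hxz, hyx⟩⟩

variable [Ring 𝕜] [DecidableEq α]

def moebiusTransform (g : α → 𝕜) (x : α) : 𝕜 := ∑ y ∈ Iic x, mu 𝕜 y x * g y

theorem zetaTransform_moebiusTransform (g : α → 𝕜) : zetaTransform (moebiusTransform g) = g := by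
  funext z
  simp only [zetaTransform, moebiusTransform]
  rw [sum_Iic_sum_Iic_comm (fun x y => mu 𝕜 y x * g y)]
  simp only [← sum_mul, sum_Icc_mu_right, ite_mul, one_mul, zero_mul, sum_ite_eq', mem_Iic,
    le_refl, if_true]

theorem moebiusTransform_zetaTransform (f : α → 𝕜) : moebiusTransform (zetaTransform f) = f := by
  funext z
  simp only [zetaTransform, moebiusTransform, mul_sum]
  rw [sum_Iic_sum_Iic_comm (fun x y => mu 𝕜 x z * f y)]
  simp only [← sum_mul, sum_Icc_mu_left, ite_mul, one_mul, zero_mul, sum_ite_eq', mem_Iic,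
    le_refl, if_true]

theorem zetaTransform_bijective : Function.Bijective (zetaTransform : (α → 𝕜) → α → 𝕜) :=
  Function.bijective_iff_has_inverse.mpr
    ⟨moebiusTransform, moebiusTransform_zetaTransform, zetaTransform_moebiusTransform⟩

end MoebiusInversion

namespace CWpaper

variable (k : Type) [CommRing k] (L : Type) [SemilatticeSup L]

theorem bandToFun_single (l : L) (c : k) :
    bandToFun k L (Finsupp.single l c) = fun μ => if l ≤ μ then c else 0 := by
  funext μ
  exact Finsupp.sum_single_index (ite_self 0)

def bandToFunLinear : (L →₀ k) →ₗ[k] L → k :=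
  Finsupp.linearCombination k fun l => (Set.Ici l).indicator 1

theorem coe_bandToFunLinear : ⇑(bandToFunLinear k L) = bandToFun k L := by
  funext f μ
  simp [bandToFunLinear, bandToFun, Finsupp.linearCombination_apply, Finsupp.sum,
    Finset.sum_apply, Set.indicator_apply]

theorem bandToFun_add (x y : BandAlgebra k L) :
    bandToFun k L (x + y) = bandToFun k L x + bandToFun k L y := by
  rw [← coe_bandToFunLinear]
  exact map_add _ x y

theorem bandToFun_smul (r : k) (x : BandAlgebra k L) :
    bandToFun k L (r • x) = r • bandToFun k L x := by
  rw [← coe_bandToFunLinear]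
  exact map_smul _ r x

theorem bandToFun_mul (x y : BandAlgebra k L) :
    bandToFun k L (x * y) = bandToFun k L x * bandToFun k L y := by
  rw [← coe_bandToFunLinear]
  revert x y
  change ∀ x y : L →₀ k,
    bandToFunLinear k L (x.sum fun a c => y.sum fun b d => Finsupp.single (a ⊔ b) (c * d)) =
      bandToFunLinear k L x * bandToFunLinear k L y
  intro x y
  simp only [map_finsuppSum, bandToFunLinear, Finsupp.linearCombination_single]
  rw [Finsupp.linearCombination_apply, Finsupp.linearCombination_apply, Finsupp.sum_mul]
  simp only [Finsupp.mul_sum, smul_mul_smul_comm, ← Set.inter_indicator_one, Set.Ici_inter_Ici]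

theorem bandToFun_eq_zetaTransform [LocallyFiniteOrderBot L] (f : L →₀ k) :
    bandToFun k L f = zetaTransform ⇑f := by
  funext μ
  change (f.sum fun a c => if a ≤ μ then c else 0) = ∑ a ∈ Iic μ, f a
  rw [Finsupp.sum, ← Finset.sum_filter]
  refine Finset.sum_subset (fun a ha => mem_Iic.mpr (mem_filter.mp ha).2) fun a ha hna => ?_
  simpa [mem_Iic.mp ha] using hna

theorem bandToFun_bijective [Finite L] : Function.Bijective (bandToFun k L) := by
  cases nonempty_fintype L
  let _ := Fintype.toLocallyFiniteOrder (α := L)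
  let _ := LocallyFiniteOrderBot.ofIic L (fun a => (Set.Iic a).toFinset) (by simp)
  have h : bandToFun k L = zetaTransform ∘ Finsupp.equivFunOnFinite :=
    funext (bandToFun_eq_zetaTransform k L)
  rw [h]
  exact zetaTransform_bijective.comp Finsupp.equivFunOnFinite.bijective

/-- For a finite join semilattice `L`, the `k`-linear map
`c : kM → k^L`, `e_λ ↦ φ_λ`, is an isomorphism of `k`-algebras from the semigroup algebra
of the band `M` onto the algebra of functions `L → k` with pointwise operations. -/
theorem statement8 [Finite L] :
    (∀ l : L, bandToFun k L (bandE k L l) = fun μ => if l ≤ μ then (1 : k) else 0) ∧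
    Function.Bijective (bandToFun k L) ∧
    (∀ x y : BandAlgebra k L, bandToFun k L (x + y) = bandToFun k L x + bandToFun k L y) ∧
    (∀ (r : k) (x : BandAlgebra k L), bandToFun k L (r • x) = r • bandToFun k L x) ∧
    (∀ x y : BandAlgebra k L, bandToFun k L (x * y) = bandToFun k L x * bandToFun k L y) :=
  ⟨fun l => bandToFun_single k L l 1, bandToFun_bijective k L, bandToFun_add k L,
    bandToFun_smul k L, bandToFun_mul k L⟩

end CWpaper
end
end

section
/- Set a₀ = (1+g)(1−e), a₁ = e(1+g), a₂ = (g−1)(1−e), a₃ = (g−u)e in C_{A₁}(u). If 2(u+1) is invertible in k, then (a₀, a₁, a₂, a₃) is a k-basis of C_{A₁}(u) consisting of simultaneous eigenvectors for left multiplication by e and by g, with: e·a₀ = 0, e·a₁ = a₁, e·a₂ = 0, e·a₃ = a₃, and g·a₀ = a₀, g·a₁ = u·a₁, g·a₂ = −a₂, g·a₃ = −a₃. Consequently, for any λ ∈ k, g + λge acts on this basis with eigenvalues 1, u(1+λ), −1, −(1+λ). -/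
/-
The generators act diagonally on the aᵢ because the defining relations factor as
(g − 1)(g + 1)(1 − e) = 0 and (g − u)(g + 1)e = 0 in the commutative algebra C_{A₁}(u).
The span of the aᵢ contains 1 = (a₀ − a₂)/2 + (a₁ − a₃)/(u + 1) and is stable under left
multiplication by the generators, hence is everything. Linear independence is detected by the
four characters (g, e) ↦ (1, 0), (u, 1), (−1, 0), (−1, 1), which send a₀, a₁, a₂, a₃ to
2, u + 1, −2, −(u + 1) times the corresponding coordinate vector of k⁴.
-/

open scoped Classical

noncomputable section

namespace CWpaper

variable (k : Type) [CommRing k] (u : k)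

/-- The defining relations of the algebra `C_{A₁}(u)`: two generators `g` (indexed by
`true`) and `e` (indexed by `false`) with `e² = e`, `ge = eg`,
`g² = 1 + (u−1)e(1+g)`. -/
inductive A1rel : FreeAlgebra k Bool → FreeAlgebra k Bool → Prop
  | idem : A1rel (FreeAlgebra.ι k false * FreeAlgebra.ι k false) (FreeAlgebra.ι k false)
  | comm : A1rel (FreeAlgebra.ι k true * FreeAlgebra.ι k false)
      (FreeAlgebra.ι k false * FreeAlgebra.ι k true)
  | quad : A1rel (FreeAlgebra.ι k true * FreeAlgebra.ι k true)
      (1 + algebraMap k _ (u - 1) * FreeAlgebra.ι k false * (1 + FreeAlgebra.ι k true))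

/-- The algebra `C_{A₁}(u)`. -/
abbrev CA1 : Type := RingQuot (A1rel k u)

/-- The generator `g` of `C_{A₁}(u)`. -/
def gA1 : CA1 k u := RingQuot.mkAlgHom k (A1rel k u) (FreeAlgebra.ι k true)

/-- The generator `e` of `C_{A₁}(u)`. -/
def eA1 : CA1 k u := RingQuot.mkAlgHom k (A1rel k u) (FreeAlgebra.ι k false)

/-- `a₀ = (1+g)(1−e)`. -/
def a0 : CA1 k u := (1 + gA1 k u) * (1 - eA1 k u)
/-- `a₁ = e(1+g)`. -/
def a1 : CA1 k u := eA1 k u * (1 + gA1 k u)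
/-- `a₂ = (g−1)(1−e)`. -/
def a2 : CA1 k u := (gA1 k u - 1) * (1 - eA1 k u)
/-- `a₃ = (g−u)e`. -/
def a3 : CA1 k u := (gA1 k u - algebraMap k _ u) * eA1 k u

theorem _root_.Submodule.span_eq_top_of_mul_mem {R A : Type*} [CommSemiring R] [Semiring A]
    [Algebra R A] {s t : Set A} (hs : Algebra.adjoin R s = ⊤) (h1 : 1 ∈ Submodule.span R t)
    (hmul : ∀ a ∈ s, ∀ x ∈ t, a * x ∈ Submodule.span R t) :
    Submodule.span R t = ⊤ := by
  set S := Submodule.span R t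
  have hmulS (a : A) (ha : a ∈ s) : ∀ x ∈ S, a * x ∈ S :=
    fun x hx => (Submodule.map_span_le (LinearMap.mulLeft R a) t S).2 (hmul a ha)
      ⟨x, hx, rfl⟩
  have hmulAdjoin (y : A) (hy : y ∈ Algebra.adjoin R s) : ∀ x ∈ S, y * x ∈ S := by
    induction hy using Algebra.adjoin_induction with
    | mem a ha => exact hmulS a ha
    | algebraMap r => exact fun x hx => by simpa [← Algebra.smul_def] using S.smul_mem r hx
    | add y z _ _ hy hz => exact fun x hx => by simpa [add_mul] using S.add_mem (hy x hx) (hz x hx)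
    | mul y z _ _ hy hz => exact fun x hx => by simpa [mul_assoc] using hy _ (hz x hx)
  refine Submodule.eq_top_iff'.2 fun y => ?_
  simpa using hmulAdjoin y (hs ▸ Algebra.mem_top) 1 h1

lemma eA1_mul_self : eA1 k u * eA1 k u = eA1 k u := by
  simpa [eA1] using RingQuot.mkAlgHom_rel k (A1rel.idem (k := k) (u := u))

lemma gA1_mul_eA1 : gA1 k u * eA1 k u = eA1 k u * gA1 k u := by
  simpa [eA1, gA1] using RingQuot.mkAlgHom_rel k (A1rel.comm (k := k) (u := u))

lemma gA1_mul_self :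
    gA1 k u * gA1 k u = 1 + algebraMap k _ (u - 1) * eA1 k u * (1 + gA1 k u) := by
  simpa [eA1, gA1] using RingQuot.mkAlgHom_rel k (A1rel.quad (k := k) (u := u))

lemma adjoin_gA1_eA1 : Algebra.adjoin k {gA1 k u, eA1 k u} = ⊤ := by
  have h := congrArg (Subalgebra.map (RingQuot.mkAlgHom k (A1rel k u)))
    (FreeAlgebra.adjoin_range_ι k Bool)
  rw [AlgHom.map_adjoin, Algebra.map_top,
    (AlgHom.range_eq_top _).2 (RingQuot.mkAlgHom_surjective k _), ← Set.range_comp] at h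
  convert h
  ext x
  simp [gA1, eA1, or_comm]

theorem CA1.mul_comm (x y : CA1 k u) : x * y = y * x := by
  have mem_adjoin (z : CA1 k u) : z ∈ Algebra.adjoin k {gA1 k u, eA1 k u} :=
    adjoin_gA1_eA1 k u ▸ Algebra.mem_top
  have hgen : ∀ a ∈ ({gA1 k u, eA1 k u} : Set (CA1 k u)), ∀ z, Commute a z := by
    simp only [Set.mem_insert_iff, Set.mem_singleton_iff]
    rintro a (rfl | rfl) z <;>
      refine Algebra.commute_of_mem_adjoin_of_forall_mem_commute (mem_adjoin z) ?_ <;>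
      simp only [Set.mem_insert_iff, Set.mem_singleton_iff] <;>
      rintro b (rfl | rfl)
    exacts [.refl _, gA1_mul_eA1 k u, (gA1_mul_eA1 k u).symm, .refl _]
  exact Algebra.commute_of_mem_adjoin_of_forall_mem_commute (mem_adjoin y)
    fun a ha => (hgen a ha x).symm

section Commutative

local instance CA1.instCommRing : CommRing (CA1 k u) :=
  { (inferInstance : Ring (CA1 k u)) with mul_comm := CA1.mul_comm k u }

local notation "g" => gA1 k u
local notation "e" => eA1 k u
local notation "U" => algebraMap k (CA1 k u) u

lemma quadratic_mul_one_sub_eA1 : (g - 1) * (g + 1) * (1 - e) = 0 := by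
  have hg := gA1_mul_self k u
  rw [map_sub, map_one] at hg
  linear_combination (1 - e) * hg - (U - 1) * (1 + g) * eA1_mul_self k u

lemma quadratic_mul_eA1 : (g - U) * (g + 1) * e = 0 := by
  have hg := gA1_mul_self k u
  rw [map_sub, map_one] at hg
  linear_combination e * hg + (U - 1) * (1 + g) * eA1_mul_self k u

lemma eA1_mul_a0 : e * a0 k u = 0 := by
  unfold a0; linear_combination (-(1 + g)) * eA1_mul_self k u

lemma eA1_mul_a1 : e * a1 k u = a1 k u := by
  unfold a1; linear_combination (1 + g) * eA1_mul_self k u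

lemma eA1_mul_a2 : e * a2 k u = 0 := by
  unfold a2; linear_combination (1 - g) * eA1_mul_self k u

lemma eA1_mul_a3 : e * a3 k u = a3 k u := by
  unfold a3; linear_combination (g - U) * eA1_mul_self k u

lemma gA1_mul_a0 : g * a0 k u = a0 k u := by
  unfold a0; linear_combination quadratic_mul_one_sub_eA1 k u

lemma gA1_mul_a1 : g * a1 k u = u • a1 k u := by
  rw [Algebra.smul_def]; unfold a1; linear_combination quadratic_mul_eA1 k u

lemma gA1_mul_a2 : g * a2 k u = -a2 k u := by
  unfold a2; linear_combination quadratic_mul_one_sub_eA1 k u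

lemma gA1_mul_a3 : g * a3 k u = -a3 k u := by
  unfold a3; linear_combination quadratic_mul_eA1 k u

lemma a0_sub_a2 : a0 k u - a2 k u = (2 : k) • (1 - e) := by
  rw [Algebra.smul_def, map_ofNat]; unfold a0 a2; ring

lemma a1_sub_a3 : a1 k u - a3 k u = (u + 1) • e := by
  rw [Algebra.smul_def, map_add, map_one]; unfold a1 a3; ring

end Commutative

def aA1 : Fin 4 → CA1 k u := ![a0 k u, a1 k u, a2 k u, a3 k u]

def gEigenvalue : Fin 4 → k := ![1, u, -1, -1]

def eEigenvalue : Fin 4 → k := ![0, 1, 0, 1]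

lemma gA1_mul_aA1 (i : Fin 4) : gA1 k u * aA1 k u i = gEigenvalue k u i • aA1 k u i := by
  fin_cases i <;> simp [aA1, gEigenvalue, gA1_mul_a0, gA1_mul_a1, gA1_mul_a2, gA1_mul_a3]
  -- `RingQuot`'s `SMul` is the module one only up to unfolding, so `simp` misses `neg_one_smul`.
  all_goals exact (neg_one_smul k _).symm

lemma eA1_mul_aA1 (i : Fin 4) : eA1 k u * aA1 k u i = eEigenvalue k i • aA1 k u i := by
  fin_cases i <;> simp [aA1, eEigenvalue, eA1_mul_a0, eA1_mul_a1, eA1_mul_a2, eA1_mul_a3]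

lemma gA1_add_smul_mul_eA1_mul_aA1 (lam : k) (i : Fin 4) :
    (gA1 k u + lam • (gA1 k u * eA1 k u)) * aA1 k u i
      = (gEigenvalue k u i * (1 + lam * eEigenvalue k i)) • aA1 k u i := by
  rw [add_mul, smul_mul_assoc, mul_assoc, eA1_mul_aA1, mul_smul_comm, gA1_mul_aA1]
  module

lemma one_mem_span_aA1 (h2 : IsUnit (2 : k)) (hu : IsUnit (u + 1)) :
    (1 : CA1 k u) ∈ Submodule.span k (Set.range (aA1 k u)) := by
  have mem (i : Fin 4) : aA1 k u i ∈ Submodule.span k (Set.range (aA1 k u)) :=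
    Submodule.subset_span ⟨i, rfl⟩
  rw [← sub_add_cancel 1 (eA1 k u)]
  refine Submodule.add_mem _ ((Submodule.smul_mem_iff' _ h2.unit).1 ?_)
    ((Submodule.smul_mem_iff' _ hu.unit).1 ?_)
  · rw [Units.smul_def, IsUnit.unit_spec, ← a0_sub_a2]
    exact Submodule.sub_mem _ (mem 0) (mem 2)
  · rw [Units.smul_def, IsUnit.unit_spec, ← a1_sub_a3]
    exact Submodule.sub_mem _ (mem 1) (mem 3)

lemma span_aA1 (h2 : IsUnit (2 : k)) (hu : IsUnit (u + 1)) :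
    Submodule.span k (Set.range (aA1 k u)) = ⊤ := by
  refine Submodule.span_eq_top_of_mul_mem (adjoin_gA1_eA1 k u) (one_mem_span_aA1 k u h2 hu) ?_
  simp only [Set.mem_insert_iff, Set.mem_singleton_iff, Set.forall_mem_range]
  rintro a (rfl | rfl) i
  · rw [gA1_mul_aA1]; exact Submodule.smul_mem _ _ (Submodule.subset_span ⟨i, rfl⟩)
  · rw [eA1_mul_aA1]; exact Submodule.smul_mem _ _ (Submodule.subset_span ⟨i, rfl⟩)

section Lift

variable {B : Type*} [Ring B] [Algebra k B] (γ ε : B) (hε : ε * ε = ε)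
  (hcomm : γ * ε = ε * γ) (hγ : γ * γ = 1 + algebraMap k B (u - 1) * ε * (1 + γ))

def liftA1 : CA1 k u →ₐ[k] B :=
  RingQuot.liftAlgHom k ⟨FreeAlgebra.lift k (fun b => if b then γ else ε), fun x y h => by
    cases h <;> simp [hε, hcomm, hγ, map_sub]⟩

lemma liftA1_gA1 : liftA1 k u γ ε hε hcomm hγ (gA1 k u) = γ := by
  simp [liftA1, gA1]

lemma liftA1_eA1 : liftA1 k u γ ε hε hcomm hγ (eA1 k u) = ε := by
  simp [liftA1, eA1]

end Lift

def characters : CA1 k u →ₐ[k] (Fin 4 → k) :=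
  liftA1 k u (gEigenvalue k u) (eEigenvalue k)
    (by ext i; fin_cases i <;> simp [eEigenvalue])
    (mul_comm _ _)
    (by
      ext i
      fin_cases i <;> simp [eEigenvalue, gEigenvalue, Matrix.vecHead, Matrix.vecTail]
      ring)

lemma characters_gA1 : characters k u (gA1 k u) = gEigenvalue k u := liftA1_gA1 ..

lemma characters_eA1 : characters k u (eA1 k u) = eEigenvalue k := liftA1_eA1 ..

lemma linearIndependent_aA1 (h2 : IsUnit (2 : k)) (hu : IsUnit (u + 1)) :
    LinearIndependent k (aA1 k u) := by
  let w : Fin 4 → kˣ := ![h2.unit, hu.unit, -h2.unit, -hu.unit]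
  have hφ : characters k u ∘ aA1 k u = w • ⇑(Pi.basisFun k (Fin 4)) := by
    ext i j
    fin_cases i <;> fin_cases j <;>
      simp [w, aA1, a0, a1, a2, a3, characters_gA1, characters_eA1, gEigenvalue, eEigenvalue,
        Matrix.vecHead, Matrix.vecTail] <;> ring
  exact .of_comp (characters k u).toLinearMap
    (hφ ▸ (Pi.basisFun k (Fin 4)).linearIndependent.units_smul w)

/-- **Statement 14.** If `2(u+1)` is invertible in `k`, then `(a₀, a₁, a₂, a₃)` is a
`k`-basis of `C_{A₁}(u)` consisting of simultaneous eigenvectors of left multiplication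
by `e` and `g`, with the stated eigenvalues; consequently `g + λge` acts on this basis
with eigenvalues `1, u(1+λ), −1, −(1+λ)`. -/
theorem statement14 (hinv : IsUnit (2 * (u + 1))) :
    (∃ b : Module.Basis (Fin 4) k (CA1 k u),
      b 0 = a0 k u ∧ b 1 = a1 k u ∧ b 2 = a2 k u ∧ b 3 = a3 k u) ∧
    eA1 k u * a0 k u = 0 ∧
    eA1 k u * a1 k u = a1 k u ∧
    eA1 k u * a2 k u = 0 ∧
    eA1 k u * a3 k u = a3 k u ∧
    gA1 k u * a0 k u = a0 k u ∧
    gA1 k u * a1 k u = u • a1 k u ∧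
    gA1 k u * a2 k u = -(a2 k u) ∧
    gA1 k u * a3 k u = -(a3 k u) ∧
    (∀ lam : k,
      (gA1 k u + lam • (gA1 k u * eA1 k u)) * a0 k u = a0 k u ∧
      (gA1 k u + lam • (gA1 k u * eA1 k u)) * a1 k u = (u * (1 + lam)) • a1 k u ∧
      (gA1 k u + lam • (gA1 k u * eA1 k u)) * a2 k u = -(a2 k u) ∧
      (gA1 k u + lam • (gA1 k u * eA1 k u)) * a3 k u = (-(1 + lam)) • a3 k u) := by
  obtain ⟨hunit2, hunitu⟩ := IsUnit.mul_iff.1 hinv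
  let b := Module.Basis.mk (linearIndependent_aA1 k u hunit2 hunitu)
    (span_aA1 k u hunit2 hunitu).ge
  refine ⟨⟨b, ?_⟩, eA1_mul_a0 k u, eA1_mul_a1 k u, eA1_mul_a2 k u, eA1_mul_a3 k u,
    gA1_mul_a0 k u, gA1_mul_a1 k u, gA1_mul_a2 k u, gA1_mul_a3 k u, fun lam => ?_⟩
  · simp [b, aA1]
  have h := gA1_add_smul_mul_eA1_mul_aA1 k u lam
  obtain ⟨h0, h1, h2, h3⟩ : _ ∧ _ ∧ _ ∧ _ := ⟨h 0, h 1, h 2, h 3⟩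
  simp only [aA1, gEigenvalue, eEigenvalue, Matrix.cons_val, mul_zero, mul_one, add_zero,
    neg_one_mul, one_smul] at h0 h1 h2 h3
  exact ⟨h0, h1, h2.trans (neg_one_smul k (a2 k u)), h3⟩

end CWpaper
end
end

section
/- Let k be a commutative ring, A an associative unital k-algebra, M a left A-module, 𝒫 a finite partially ordered set, and (e_L)_{L∈𝒫} a family of elements of M which generates M as an A-module. For L ∈ 𝒫 set E_L = Σ_{F ≤ L} A·e_F and E'_L = Σ_{F < L} A·e_F (submodules of M). Suppose that for each L ∈ 𝒫 there are elements b_{L,1}, …, b_{L,n} ∈ A such that the quotient k-module E_L / E'_L is spanned over k by the images of b_{L,1}·e_L, …, b_{L,n}·e_L. Then M is spanned as a k-module by the n·|𝒫| elements b_{L,i}·e_L for L ∈ 𝒫 and 1 ≤ i ≤ n. -/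
/-! The filtration of `M` by the `A`-submodules `E_L` is exhausted from the bottom up: by
well-founded induction on the finite poset, each `E_L` lies in the `k`-span of the elements
`b_{L,i}·e_L`, because `E'_L` is generated by `e_F`, `F < L`, whose `A`-multiples are already
there, and the hypothesis supplies the rest of `E_L` modulo `E'_L`. -/

namespace Submodule

theorem restrictScalars_span_le_iff {k A M : Type*} [CommSemiring k] [Semiring A]
    [Algebra k A] [AddCommMonoid M] [Module k M] [Module A M] [IsScalarTower k A M]
    {t : Set M} {S : Submodule k M} :
    (span A t).restrictScalars k ≤ S ↔ ∀ a : A, ∀ x ∈ t, a • x ∈ S := by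
  rw [← span_smul_of_span_eq_top (span_univ (R := k) (M := A)), span_le, Set.smul_subset_iff]
  simp only [Set.mem_univ, true_imp_iff, SetLike.mem_coe]

end Submodule

namespace CWpaper

open Submodule

theorem restrictScalars_span_Iic_le_of_le_sup {k A M P : Type*} [CommSemiring k] [Semiring A]
    [Algebra k A] [AddCommMonoid M] [Module k M] [Module A M] [IsScalarTower k A M]
    [Preorder P] [WellFoundedLT P] (e : P → M) {S : Submodule k M}
    (h : ∀ L : P, (span A {m : M | ∃ F ≤ L, m = e F}).restrictScalars k ≤
      (span A {m : M | ∃ F < L, m = e F}).restrictScalars k ⊔ S) (L : P) :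
    (span A {m : M | ∃ F ≤ L, m = e F}).restrictScalars k ≤ S := by
  induction L using WellFoundedLT.induction with
  | _ L ih =>
    refine (h L).trans (sup_le ?_ le_rfl)
    rw [restrictScalars_span_le_iff]
    rintro a _ ⟨F, hFL, rfl⟩
    exact ih F hFL <| smul_mem _ a <| subset_span ⟨F, le_rfl, rfl⟩

/-- **Statement 18** (abstract spanning lemma). Let `M` be an `A`-module generated by a
family `(e_L)_{L ∈ 𝒫}` indexed by a finite poset `𝒫`, and set
`E_L = Σ_{F ≤ L} A·e_F`, `E'_L = Σ_{F < L} A·e_F`. If for each `L` the quotient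
`E_L / E'_L` is spanned over `k` by the images of `b_{L,1}·e_L, …, b_{L,n}·e_L`, then `M`
is spanned over `k` by the `n·|𝒫|` elements `b_{L,i}·e_L`. -/
theorem statement18 (k A M : Type) [CommRing k] [Ring A] [Algebra k A]
    [AddCommGroup M] [Module k M] [Module A M] [IsScalarTower k A M]
    (P : Type) [PartialOrder P] [Finite P]
    (e : P → M) (hgen : Submodule.span A (Set.range e) = ⊤)
    (n : ℕ) (b : P → Fin n → A)
    (hquot : ∀ L : P,
      (Submodule.span A {m : M | ∃ F ≤ L, m = e F}).restrictScalars k ≤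
        (Submodule.span A {m : M | ∃ F < L, m = e F}).restrictScalars k ⊔
          Submodule.span k (Set.range fun i : Fin n => b L i • e L)) :
    Submodule.span k (Set.range fun p : P × Fin n => b p.1 p.2 • e p.1) = ⊤ := by
  set S := Submodule.span k (Set.range fun p : P × Fin n => b p.1 p.2 • e p.1)
  have hlocal (L : P) : span k (Set.range fun i : Fin n => b L i • e L) ≤ S :=
    span_mono <| Set.range_subset_iff.2 fun i => ⟨(L, i), rfl⟩
  have hfilt := restrictScalars_span_Iic_le_of_le_sup e
    fun L => (hquot L).trans (sup_le_sup_left (hlocal L) _)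
  rw [eq_top_iff, ← restrictScalars_top k A M, ← hgen, restrictScalars_span_le_iff]
  rintro a _ ⟨L, rfl⟩
  exact hfilt L <| smul_mem _ a <| subset_span ⟨L, le_rfl, rfl⟩

end CWpaper
end

section
/- Let m ≥ 1 and let W be the dihedral group of order 2m (the Coxeter group of type I₂(m)), with R ⊆ W its set of reflections (the m reflections of the regular m-gon). Then the number of reflection subgroups of W — i.e. of subgroups of the form ⟨T⟩ for some subset T ⊆ R, including the trivial subgroup ⟨∅⟩ — equals 1 + σ(m), where σ(m) is the sum of the positive divisors of m. -/
/-!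
A subgroup `H` of `DihedralGroup m` containing a reflection `sr a` is the union of its rotations
`r x`, `x ∈ A`, and the coset `sr a * r x`, `x ∈ A`. The subgroup `A ≤ ZMod m` is `eℤ/mℤ` for a
unique `e ∣ m`, so `H` is determined by `e` and the residue `a mod e`, and each of these `e`
residues occurs, since the resulting subgroup is generated by its reflections. Together with the
trivial subgroup this gives `1 + ∑_{e ∣ m} e` reflection subgroups.
-/

namespace CWpaper

open DihedralGroup

theorem ZMod.exists_forall_mem_iff_castHom_eq_zero {m : ℕ} (A : AddSubgroup (ZMod m)) :
    ∃ e, ∃ he : e ∣ m, ∀ x, x ∈ A ↔ ZMod.castHom he (ZMod e) x = 0 := by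
  obtain ⟨k, hk⟩ := Int.subgroup_cyclic (A.comap (Int.castAddHom (ZMod m)))
  rw [← AddSubgroup.zmultiples_eq_closure, ← Int.zmultiples_natAbs] at hk
  have mem_iff (n : ℤ) : (n : ZMod m) ∈ A ↔ (k.natAbs : ℤ) ∣ n := by
    rw [← Int.mem_zmultiples_iff, ← hk]
    rfl
  refine ⟨k.natAbs, by exact_mod_cast (mem_iff m).1 (by simp), fun x ↦ ?_⟩
  obtain ⟨n, rfl⟩ := ZMod.intCast_surjective x
  rw [mem_iff, map_intCast, ZMod.intCast_zmod_eq_zero_iff_dvd]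

variable {m e : ℕ}

def IsReflectionSubgroup (H : Subgroup (DihedralGroup m)) : Prop :=
  ∃ T : Set (DihedralGroup m), (∀ x ∈ T, ∃ i : ZMod m, x = sr i) ∧ Subgroup.closure T = H

def rotationSubgroup (H : Subgroup (DihedralGroup m)) : AddSubgroup (ZMod m) where
  carrier := {x | r x ∈ H}
  zero_mem' := by simp
  add_mem' {x y} hx hy := by simpa using H.mul_mem hx hy
  neg_mem' {x} hx := by simpa using H.inv_mem hx

@[simp]
theorem mem_rotationSubgroup {H : Subgroup (DihedralGroup m)} {x : ZMod m} :
    x ∈ rotationSubgroup H ↔ r x ∈ H := Iff.rfl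

/-- For `m ≠ 0`, the stabiliser of an inscribed regular `m/e`-gon, of order `2m/e`. -/
def reflectionSubgroup (he : e ∣ m) (j : ZMod e) : Subgroup (DihedralGroup m) where
  carrier := {g | match g with
    | r x => ZMod.castHom he (ZMod e) x = 0
    | sr y => ZMod.castHom he (ZMod e) y = j}
  one_mem' := map_zero _
  mul_mem' := by
    rintro (x | x) (y | y) hx hy <;> simp_all
  inv_mem' := by
    rintro (x | x) hx <;> simp_all

@[simp]
theorem r_mem_reflectionSubgroup {he : e ∣ m} {j : ZMod e} {x : ZMod m} :
    r x ∈ reflectionSubgroup he j ↔ ZMod.castHom he (ZMod e) x = 0 := Iff.rfl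

@[simp]
theorem sr_mem_reflectionSubgroup {he : e ∣ m} {j : ZMod e} {y : ZMod m} :
    sr y ∈ reflectionSubgroup he j ↔ ZMod.castHom he (ZMod e) y = j := Iff.rfl

theorem closure_sr_preimage_eq_reflectionSubgroup (he : e ∣ m) (j : ZMod e) :
    Subgroup.closure (sr '' (ZMod.castHom he (ZMod e) ⁻¹' {j})) = reflectionSubgroup he j := by
  refine le_antisymm (Subgroup.closure_le _ |>.2 ?_) ?_
  · rintro _ ⟨y, hy, rfl⟩
    exact hy
  · obtain ⟨y₀, hy₀⟩ := ZMod.castHom_surjective he j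
    have sr_mem {y} (hy : ZMod.castHom he (ZMod e) y = j) :
        sr y ∈ Subgroup.closure (sr '' (ZMod.castHom he (ZMod e) ⁻¹' {j})) :=
      Subgroup.subset_closure ⟨y, hy, rfl⟩
    rintro (x | y) hg
    · have hx : ZMod.castHom he (ZMod e) x = 0 := hg
      simpa using mul_mem (sr_mem hy₀) (sr_mem (y := y₀ + x) (by rw [map_add, hx, hy₀, add_zero]))
    · exact sr_mem hg

theorem isReflectionSubgroup_reflectionSubgroup (he : e ∣ m) (j : ZMod e) :
    IsReflectionSubgroup (reflectionSubgroup he j) :=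
  ⟨_, by rintro _ ⟨y, -, rfl⟩; exact ⟨y, rfl⟩, closure_sr_preimage_eq_reflectionSubgroup he j⟩

theorem IsReflectionSubgroup.eq_bot_or_exists_sr_mem {H : Subgroup (DihedralGroup m)}
    (hH : IsReflectionSubgroup H) : H = ⊥ ∨ ∃ a, sr a ∈ H := by
  obtain ⟨T, hT, rfl⟩ := hH
  obtain rfl | ⟨t, ht⟩ := T.eq_empty_or_nonempty
  · exact .inl Subgroup.closure_empty
  · obtain ⟨a, rfl⟩ := hT t ht
    exact .inr ⟨a, Subgroup.subset_closure ht⟩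

theorem exists_eq_reflectionSubgroup_of_sr_mem {H : Subgroup (DihedralGroup m)} {a : ZMod m}
    (ha : sr a ∈ H) : ∃ e, ∃ he : e ∣ m, H = reflectionSubgroup he (ZMod.castHom he (ZMod e) a) := by
  obtain ⟨e, he, hA⟩ := ZMod.exists_forall_mem_iff_castHom_eq_zero (rotationSubgroup H)
  refine ⟨e, he, ?_⟩
  ext (x | y)
  · simpa using hA x
  · rw [← H.mul_mem_cancel_left ha, sr_mul_sr, ← mem_rotationSubgroup, hA, map_sub, sub_eq_zero,
      sr_mem_reflectionSubgroup]

theorem dvd_of_reflectionSubgroup_le {e' : ℕ} {he : e ∣ m} {he' : e' ∣ m} {j : ZMod e}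
    {j' : ZMod e'} (h : reflectionSubgroup he j ≤ reflectionSubgroup he' j') : e' ∣ e := by
  have : r (e : ZMod m) ∈ reflectionSubgroup he j := by simp
  simpa [ZMod.natCast_eq_zero_iff] using h this

theorem eq_of_reflectionSubgroup_le {he : e ∣ m} {j j' : ZMod e}
    (h : reflectionSubgroup he j ≤ reflectionSubgroup he j') : j = j' := by
  obtain ⟨y, rfl⟩ := ZMod.castHom_surjective he j
  exact h (sr_mem_reflectionSubgroup.2 rfl)

theorem reflectionSubgroup_ne_bot (he : e ∣ m) (j : ZMod e) : reflectionSubgroup he j ≠ ⊥ := by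
  obtain ⟨y, rfl⟩ := ZMod.castHom_surjective he j
  intro h
  have : sr y ∈ (⊥ : Subgroup (DihedralGroup m)) := h ▸ sr_mem_reflectionSubgroup.2 rfl
  cases (Subgroup.mem_bot.1 this : sr y = r 0)

def indexedReflectionSubgroup (m : ℕ) :
    Option (Σ e : m.divisors, ZMod e) → Subgroup (DihedralGroup m)
  | none => ⊥
  | some ⟨e, j⟩ => reflectionSubgroup (Nat.dvd_of_mem_divisors e.2) j

theorem indexedReflectionSubgroup_injective (m : ℕ) :
    Function.Injective (indexedReflectionSubgroup m) := by
  rintro (_ | ⟨⟨e, he⟩, j⟩) (_ | ⟨⟨e', he'⟩, j'⟩) h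
  · rfl
  · exact (reflectionSubgroup_ne_bot _ _ h.symm).elim
  · exact (reflectionSubgroup_ne_bot _ _ h).elim
  · obtain rfl : e = e' :=
      Nat.dvd_antisymm (dvd_of_reflectionSubgroup_le h.ge) (dvd_of_reflectionSubgroup_le h.le)
    obtain rfl := eq_of_reflectionSubgroup_le h.le
    rfl

theorem isReflectionSubgroup_iff_mem_range (hm : m ≠ 0) {H : Subgroup (DihedralGroup m)} :
    IsReflectionSubgroup H ↔ H ∈ Set.range (indexedReflectionSubgroup m) := by
  constructor
  · intro hH
    obtain rfl | ⟨a, ha⟩ := hH.eq_bot_or_exists_sr_mem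
    · exact ⟨none, rfl⟩
    · obtain ⟨e, he, rfl⟩ := exists_eq_reflectionSubgroup_of_sr_mem ha
      exact ⟨some ⟨⟨e, Nat.mem_divisors.2 ⟨he, hm⟩⟩, _⟩, rfl⟩
  · rintro ⟨_ | ⟨e, j⟩, rfl⟩
    · exact ⟨∅, by simp, Subgroup.closure_empty⟩
    · exact isReflectionSubgroup_reflectionSubgroup _ _

theorem card_option_sigma_divisors_zmod :
    Nat.card (Option (Σ e : m.divisors, ZMod e)) = 1 + ∑ d ∈ m.divisors, d := by
  have (e : m.divisors) : NeZero (e : ℕ) := ⟨(Nat.pos_of_mem_divisors e.2).ne'⟩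
  rw [Finite.card_option, Nat.card_sigma, add_comm, ← Finset.sum_coe_sort m.divisors]
  simp only [Nat.card_zmod]

/-- **Statement 19.** For `m ≥ 1`, the number of reflection subgroups of the dihedral
group of order `2m` — subgroups generated by a set of reflections `sr i` — equals
`1 + σ(m)`, the sum of the positive divisors of `m` plus one. -/
theorem statement19 (m : ℕ) (hm : 1 ≤ m) :
    Nat.card {H : Subgroup (DihedralGroup m) //
        ∃ T : Set (DihedralGroup m),
          (∀ x ∈ T, ∃ i : ZMod m, x = DihedralGroup.sr i) ∧ Subgroup.closure T = H} =
      1 + ∑ d ∈ Nat.divisors m, d := by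
  replace hm : m ≠ 0 := Nat.one_le_iff_ne_zero.mp hm
  calc Nat.card {H : Subgroup (DihedralGroup m) // IsReflectionSubgroup H}
      = Nat.card (Set.range (indexedReflectionSubgroup m)) :=
        Nat.card_congr (Equiv.subtypeEquivRight fun _ ↦ isReflectionSubgroup_iff_mem_range hm)
    _ = Nat.card (Option (Σ e : m.divisors, ZMod e)) :=
        Nat.card_range_of_injective (indexedReflectionSubgroup_injective m)
    _ = 1 + ∑ d ∈ m.divisors, d := card_option_sigma_divisors_zmod

end CWpaper
end
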